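/- Fix i ≥ 0 and regard the carry bit c_i of an adder with incoming carry as the Boolean function of the 2i+3 variables c₋₁, a_0, b_0, a_1, b_1, …, a_i, b_i defined recursively by c_l = (a_l ∧ b_l) ∨ (a_l ∧ c_{l-1}) ∨ (b_l ∧ c_{l-1}) for 0 ≤ l ≤ i. Under the interleaved variable order c₋₁, a_0, b_0, a_1, b_1, …, a_i, b_i, the number of distinct non-constant prefix restrictions of c_i is at most 3·i + 6. -/
import Mathlib


/-- The prefix restriction of a Boolean function `f : (Fin n → Bool) → Bool`
obtained by fixing the first `k` variables (w.r.t. the order `x_0, …, x_{n-1}`)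
to the constants given by `ρ`, regarded again as a function
`(Fin n → Bool) → Bool` that ignores the fixed coordinates. -/
def prefixRestrict {n : ℕ} (f : (Fin n → Bool) → Bool) (k : ℕ) (ρ : Fin n → Bool) :
    (Fin n → Bool) → Bool :=
  fun x => f fun j => if (j : ℕ) < k then ρ j else x j

/-- The number of distinct non-constant prefix restrictions of
`f : (Fin n → Bool) → Bool` under the variable order `x_0, …, x_{n-1}`.
This equals the number of internal nodes of the reduced ordered BDD of `f`
under this variable order, and is taken as the definition of the BDD size. -/
noncomputable def bddSize {n : ℕ} (f : (Fin n → Bool) → Bool) : ℕ :=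
  Set.ncard {g : (Fin n → Bool) → Bool |
    (∃ k ≤ n, ∃ ρ : Fin n → Bool, g = prefixRestrict f k ρ) ∧ ¬∃ c, ∀ x, g x = c}

/-- The carry chain of an adder on the `2i+3` variables
`x 0 = c₋₁, x 1 = a_0, x 2 = b_0, …, x (2i+1) = a_i, x (2i+2) = b_i`:
`adderCarry i x 0 = c₋₁` and `adderCarry i x (l+1) = c_l` where
`c_l = (a_l ∧ b_l) ∨ (a_l ∧ c_{l-1}) ∨ (b_l ∧ c_{l-1})`. -/
def adderCarry (i : ℕ) (x : Fin (2 * i + 3) → Bool) : ℕ → Bool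
  | 0 => x ⟨0, by omega⟩
  | l + 1 =>
      if h : l ≤ i then
        (x ⟨2 * l + 1, by omega⟩ && x ⟨2 * l + 2, by omega⟩) ||
          (x ⟨2 * l + 1, by omega⟩ && adderCarry i x l) ||
          (x ⟨2 * l + 2, by omega⟩ && adderCarry i x l)
      else false

/-- The carry bit `c_i` of an adder with incoming carry, regarded as a Boolean
function of the `2i+3` variables `c₋₁, a_0, b_0, a_1, b_1, …, a_i, b_i`
(in this interleaved order), defined recursively by
`c_l = (a_l ∧ b_l) ∨ (a_l ∧ c_{l-1}) ∨ (b_l ∧ c_{l-1})` for `0 ≤ l ≤ i`. -/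
def carryBit (i : ℕ) (x : Fin (2 * i + 3) → Bool) : Bool :=
  adderCarry i x (i + 1)

lemma adderCarry_congr_lt (i : ℕ) (y z : Fin (2*i+3) → Bool) :
    ∀ l, (∀ j : Fin (2*i+3), (j:ℕ) < 2*l+1 → y j = z j) →
      adderCarry i y l = adderCarry i z l := by
  intro l
  induction l with
  | zero => intro h; exact h ⟨0, by omega⟩ (show (0:ℕ) < 2*0+1 by omega)
  | succ l ih =>
    intro h
    simp only [adderCarry]
    split
    · rw [ih (fun j hj => h j (by omega)), h ⟨2*l+1, by omega⟩ (show 2*l+1 < 2*(l+1)+1 by omega),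
        h ⟨2*l+2, by omega⟩ (show 2*l+2 < 2*(l+1)+1 by omega)]
    · rfl

lemma adderCarry_const (i : ℕ) (y : Fin (2*i+3) → Bool) (c : Bool) :
    ∀ l, l ≤ i+1 → (∀ j : Fin (2*i+3), (j:ℕ) < 2*l+1 → y j = c) →
      adderCarry i y l = c := by
  intro l
  induction l with
  | zero => intro _ h; exact h ⟨0, by omega⟩ (show (0:ℕ) < 2*0+1 by omega)
  | succ l ih =>
    intro hl h
    simp only [adderCarry]
    rw [dif_pos (by omega : l ≤ i)]
    rw [ih (by omega) (fun j hj => h j (by omega)), h ⟨2*l+1, by omega⟩ (show 2*l+1 < 2*(l+1)+1 by omega),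
      h ⟨2*l+2, by omega⟩ (show 2*l+2 < 2*(l+1)+1 by omega)]
    cases c <;> rfl

lemma adderCarry_congr_ge (i : ℕ) (y z : Fin (2*i+3) → Bool) (l : ℕ)
    (hc : adderCarry i y l = adderCarry i z l)
    (h : ∀ j : Fin (2*i+3), 2*l+1 ≤ (j:ℕ) → y j = z j) :
    ∀ m, adderCarry i y (l+m) = adderCarry i z (l+m) := by
  intro m
  induction m with
  | zero => exact hc
  | succ m ih =>
    show adderCarry i y (l+m+1) = adderCarry i z (l+m+1)
    simp only [adderCarry]
    split
    · rw [ih, h ⟨2*(l+m)+1, by omega⟩ (show 2*l+1 ≤ 2*(l+m)+1 by omega), h ⟨2*(l+m)+2, by omega⟩ (show 2*l+1 ≤ 2*(l+m)+2 by omega)]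
    · rfl

lemma carryBit_congr (i : ℕ) (y z : Fin (2*i+3) → Bool) (l : ℕ) (hl : l ≤ i+1)
    (hc : adderCarry i y l = adderCarry i z l)
    (h : ∀ j : Fin (2*i+3), 2*l+1 ≤ (j:ℕ) → y j = z j) :
    carryBit i y = carryBit i z := by
  have h2 := adderCarry_congr_ge i y z l hc h (i+1-l)
  unfold carryBit
  rwa [Nat.add_sub_cancel' hl] at h2

lemma adderCarry_succ' (i : ℕ) (y : Fin (2*i+3) → Bool) (l : ℕ) (h : l ≤ i) :
    adderCarry i y (l+1) =
      ((y ⟨2*l+1, by omega⟩ && y ⟨2*l+2, by omega⟩ ||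
        y ⟨2*l+1, by omega⟩ && adderCarry i y l) ||
        y ⟨2*l+2, by omega⟩ && adderCarry i y l) := by
  simp only [adderCarry]
  split
  · rfl
  · omega

def canonG (i l : ℕ) (c : Bool) : (Fin (2*i+3) → Bool) → Bool :=
  prefixRestrict (carryBit i) (2*l+1) (fun _ => c)

def canonH (i l : ℕ) : (Fin (2*i+3) → Bool) → Bool :=
  prefixRestrict (carryBit i) (2*l+2) (fun j => if (j:ℕ) < 2*l+1 then false else true)

lemma classify (i k : ℕ) (hk : k ≤ 2*i+3) (ρ : Fin (2*i+3) → Bool) :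
    prefixRestrict (carryBit i) k ρ = carryBit i ∨
    (∃ l, l ≤ i+1 ∧ ∃ c, prefixRestrict (carryBit i) k ρ = canonG i l c) ∨
    (∃ l, l ≤ i ∧ prefixRestrict (carryBit i) k ρ = canonH i l) := by
  rcases Nat.eq_zero_or_pos k with rfl | hk0
  · left
    funext x
    simp [prefixRestrict]
  rcases Nat.even_or_odd k with he | ho
  · -- even, k = 2*l+2
    obtain ⟨l, rfl⟩ : ∃ l, k = 2*l+2 := by
      obtain ⟨m, hm⟩ := he; exact ⟨m-1, by omega⟩
    have hli : l ≤ i := by omega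
    set w₀ : Fin (2*i+3) → Bool := fun j => if (j:ℕ) < 2*l+2 then ρ j else false with hw₀
    set c : Bool := adderCarry i w₀ l with hc
    by_cases hac : ρ ⟨2*l+1, by omega⟩ = c
    · right; left
      refine ⟨l+1, by omega, c, ?_⟩
      funext x
      simp only [canonG, prefixRestrict]
      apply carryBit_congr i _ _ (l+1) (by omega)
      · -- carries at level l+1 agree
        have hL : adderCarry i (fun j => if (j:ℕ) < 2*l+2 then ρ j else x j) l = c := by
          rw [hc]
          exact adderCarry_congr_lt i _ _ l (fun j hj => by
            simp only [hw₀]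
            rw [if_pos (by omega), if_pos (by omega)])
        have hR : adderCarry i (fun j => if (j:ℕ) < 2*(l+1)+1 then (fun _ => c) j else x j) (l+1) = c :=
          adderCarry_const i _ c (l+1) (by omega) (fun j hj => by
            rw [if_pos (by omega)])
        rw [hR, adderCarry_succ' i _ l hli, hL]
        simp only [Fin.val_mk]
        rw [if_pos (show 2*l+1 < 2*l+2 by omega), if_neg (show ¬(2*l+2 < 2*l+2) by omega), hac]
        cases c <;> simp
      · intro j hj
        show (if (j:ℕ) < 2*l+2 then ρ j else x j) = (if (j:ℕ) < 2*(l+1)+1 then c else x j)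
        rw [if_neg (by omega), if_neg (by omega)]
    · right; right
      refine ⟨l, hli, ?_⟩
      funext x
      simp only [canonH, prefixRestrict]
      apply carryBit_congr i _ _ (l+1) (by omega)
      · have hL : adderCarry i (fun j => if (j:ℕ) < 2*l+2 then ρ j else x j) l = c := by
          rw [hc]
          exact adderCarry_congr_lt i _ _ l (fun j hj => by
            simp only [hw₀]
            rw [if_pos (by omega), if_pos (by omega)])
        have hR0 : adderCarry i (fun j : Fin (2*i+3) =>
            if (j:ℕ) < 2*l+2 then (if (j:ℕ) < 2*l+1 then false else true) else x j) l = false :=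
          adderCarry_const i _ false l (by omega) (fun j hj => by
            rw [if_pos (by omega), if_pos (by omega)])
        have hne : ρ ⟨2*l+1, by omega⟩ = !c := by
          cases hb : ρ ⟨2*l+1, by omega⟩ <;> cases hcv : c <;> simp_all
        rw [adderCarry_succ' i _ l hli, adderCarry_succ' i _ l hli, hL, hR0]
        simp only [Fin.val_mk, hne]
        simp only [show (2*l+1:ℕ) < 2*l+2 from by omega,
          show ¬((2*l+2:ℕ) < 2*l+2) from by omega,
          show ¬((2*l+1:ℕ) < 2*l+1) from by omega, if_true, if_false, ite_true, ite_false]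
        cases c <;> simp
      · intro j hj
        show (if (j:ℕ) < 2*l+2 then ρ j else x j) = (if (j:ℕ) < 2*l+2 then _ else x j)
        rw [if_neg (by omega), if_neg (by omega)]
  · -- odd, k = 2*l+1
    obtain ⟨l, rfl⟩ := ho
    have hli : l ≤ i + 1 := by omega
    right; left
    refine ⟨l, hli, adderCarry i (fun j => if (j:ℕ) < 2*l+1 then ρ j else false) l, ?_⟩
    funext x
    simp only [canonG, prefixRestrict]
    apply carryBit_congr i _ _ l hli
    · have h1 : adderCarry i (fun j => if (j:ℕ) < 2*l+1 then ρ j else x j) l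
          = adderCarry i (fun j => if (j:ℕ) < 2*l+1 then ρ j else false) l :=
        adderCarry_congr_lt i _ _ l (fun j hj => by
          rw [if_pos (by omega), if_pos (by omega)])
      have h2 : adderCarry i (fun j : Fin (2*i+3) => if (j:ℕ) < 2*l+1
            then adderCarry i (fun j => if (j:ℕ) < 2*l+1 then ρ j else false) l else x j) l
          = adderCarry i (fun j => if (j:ℕ) < 2*l+1 then ρ j else false) l :=
        adderCarry_const i _ _ l hli (fun j hj => by rw [if_pos (by omega)])
      rw [h1, h2]
    · intro j hj
      show (if (j:ℕ) < 2*l+1 then ρ j else x j) = (if (j:ℕ) < 2*l+1 then _ else x j)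
      rw [if_neg (by omega), if_neg (by omega)]

/-- **BDD size of the carry bit.** For every `i ≥ 0`, under the interleaved
variable order `c₋₁, a_0, b_0, …, a_i, b_i`, the number of distinct
non-constant prefix restrictions of the carry bit `c_i` (i.e. its BDD size)
is at most `3·i + 6`. -/
theorem carryBit_bddSize_le (i : ℕ) : bddSize (carryBit i) ≤ 3 * i + 6 := by
  classical
  let F : Option ((Fin (i+2) × Bool) ⊕ Fin (i+1)) → ((Fin (2*i+3) → Bool) → Bool) :=
    fun p => match p with
      | none => carryBit i
      | some (.inl (l, c)) => canonG i l c
      | some (.inr l) => canonH i l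
  have hsub : {g : (Fin (2*i+3) → Bool) → Bool |
      (∃ k ≤ 2*i+3, ∃ ρ : Fin (2*i+3) → Bool, g = prefixRestrict (carryBit i) k ρ) ∧
        ¬∃ c, ∀ x, g x = c} ⊆ Set.range F := by
    rintro g ⟨⟨k, hk, ρ, rfl⟩, -⟩
    rcases classify i k hk ρ with h | ⟨l, hl, c, h⟩ | ⟨l, hl, h⟩
    · exact ⟨none, h.symm⟩
    · exact ⟨some (.inl (⟨l, by omega⟩, c)), h.symm⟩
    · exact ⟨some (.inr ⟨l, by omega⟩), h.symm⟩
  have h1 : bddSize (carryBit i) ≤ (Set.range F).ncard := by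
    unfold bddSize
    exact Set.ncard_le_ncard hsub (Set.finite_range F)
  have h2 : (Set.range F).ncard ≤ Fintype.card (Option ((Fin (i+2) × Bool) ⊕ Fin (i+1))) := by
    rw [← Set.image_univ]
    calc (F '' Set.univ).ncard ≤ (Set.univ : Set (Option ((Fin (i+2) × Bool) ⊕ Fin (i+1)))).ncard :=
          Set.ncard_image_le Set.finite_univ
      _ = _ := by rw [Set.ncard_univ, Nat.card_eq_fintype_card]
  have h3 : Fintype.card (Option ((Fin (i+2) × Bool) ⊕ Fin (i+1))) = 3*i+6 := by
    simp [Fintype.card_option, Fintype.card_sum, Fintype.card_prod]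
    ring
  omega
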